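/- Fix $n \geq 3$, a field $K$, and $1 \leq i \leq n-2$. With $h^k(X)$ the diagonal matrix whose first $k$ entries are $X$ and the rest $1$, and $e_j = I + E_{j,j+1}$, the following identity holds for all $X \in K$ with $X \neq 0$ and $X \neq -1$: $e_i\, h^i(X)\, e_{i+1}\, e_i = h^{i+1}(1+X^{-1})^{-1}\, h^i(1+X)\, e_{i+1}\, e_i\, h^{i+1}(X^{-1})\, e_{i+1}\, h^i(1+X^{-1})^{-1}\, h^{i+1}(1+X)$. -/

import Mathlib

/-- `h^k(X)`: the diagonal matrix whose first `k` diagonal entries equal `X` and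
whose remaining diagonal entries equal `1`. -/
def hMat (n : ℕ) (K : Type*) [Field K] (k : ℕ) (X : K) : Matrix (Fin n) (Fin n) K :=
  Matrix.diagonal fun a => if (a : ℕ) < k then X else 1

/-- `e_j = I + E_{j,j+1}` (indices 1-based). -/
def eMat (n : ℕ) (K : Type*) [Field K] (j : ℕ) : Matrix (Fin n) (Fin n) K :=
  Matrix.of fun a b =>
    if a = b then 1 else if (a : ℕ) + 1 = j ∧ (b : ℕ) = j then 1 else 0

/-! Write `p, q, r` for the 0-based indices `i - 1, i, i + 1` and `x_{pq}(t) = 1 + t E_{pq}`, so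
that `eᵢ = x_{pq}(1)` and `eᵢ₊₁ = x_{qr}(1)`. Conjugating a transvection by a diagonal matrix only
rescales it, so on both sides all diagonal factors can be pushed to the right. On the right-hand
side they multiply to `hⁱ(X)`, which is also what the left-hand side leaves over, and the identity
reduces to the Steinberg relation
`x_{pq}(1) x_{qr}(1) x_{pq}(X) = x_{qr}(X/(1+X)) x_{pq}(1+X) x_{qr}(1/(1+X))` in `SL₃`. -/

open Matrix

namespace Matrix

variable {ι R : Type*} [Fintype ι] [DecidableEq ι]

theorem diagonal_mul_single [CommRing R] (d : ι → R) (a b : ι) (c : R) :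
    diagonal d * single a b c = single a b (d a * c) := by
  ext x y
  rcases eq_or_ne a x with rfl | hax <;> simp [diagonal_mul, single_apply, *]

theorem single_mul_diagonal [CommRing R] (d : ι → R) (a b : ι) (c : R) :
    single a b c * diagonal d = single a b (c * d b) := by
  ext x y
  rcases eq_or_ne b y with rfl | hby <;> simp [mul_diagonal, single_apply, *]

theorem diagonal_mul_transvection [CommRing R] {d : ι → R} {a b : ι} {c c' : R}
    (h : d a * c = c' * d b) :
    diagonal d * transvection a b c = transvection a b c' * diagonal d := by
  simp only [transvection, Matrix.mul_add, Matrix.add_mul, Matrix.mul_one, Matrix.one_mul,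
    diagonal_mul_single, single_mul_diagonal, h]

theorem transvection_mul_transvection_mul_transvection [Field R] {a b c : ι}
    (hab : a ≠ b) (hbc : b ≠ c) (hac : a ≠ c) (s t u : R) (hsu : s + u ≠ 0) :
    transvection a b s * transvection b c t * transvection a b u =
      transvection b c (t * u / (s + u)) * transvection a b (s + u) *
        transvection b c (s * t / (s + u)) := by
  have hsplit : single b c t = single b c (t * u / (s + u)) + single b c (s * t / (s + u)) := by
    rw [← single_add]; congr 1; field_simp; ring
  simp only [transvection, Matrix.mul_add, Matrix.add_mul, Matrix.one_mul, Matrix.mul_one,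
    single_mul_single_same, single_mul_single_of_ne, hab.symm, hbc.symm, hac.symm, ne_eq,
    not_false_eq_true, add_zero, mul_div_cancel₀ _ hsu]
  rw [hsplit, single_add]
  abel

end Matrix

section

variable {n : ℕ} {K : Type*} [Field K] {k : ℕ} {a b : Fin n}

theorem hMat_mul_transvection_mul_of_lt_of_le (ha : (a : ℕ) < k) (hb : k ≤ (b : ℕ))
    (Y c : K) (M : Matrix (Fin n) (Fin n) K) :
    hMat n K k Y * (transvection a b c * M) = transvection a b (Y * c) * (hMat n K k Y * M) := by
  rw [← Matrix.mul_assoc, ← Matrix.mul_assoc, hMat, diagonal_mul_transvection]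
  simp [ha, hb]

theorem hMat_mul_transvection_mul_of_lt_iff (h : (a : ℕ) < k ↔ (b : ℕ) < k)
    (Y c : K) (M : Matrix (Fin n) (Fin n) K) :
    hMat n K k Y * (transvection a b c * M) = transvection a b c * (hMat n K k Y * M) := by
  rw [← Matrix.mul_assoc, ← Matrix.mul_assoc, hMat, diagonal_mul_transvection]
  simp only [h, mul_comm]

theorem hMat_mul_transvection_of_lt_of_le (ha : (a : ℕ) < k) (hb : k ≤ (b : ℕ)) (Y c : K) :
    hMat n K k Y * transvection a b c = transvection a b (Y * c) * hMat n K k Y := by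
  simpa using hMat_mul_transvection_mul_of_lt_of_le ha hb Y c 1

theorem hMat_inv {Y : K} (hY : Y ≠ 0) : (hMat n K k Y)⁻¹ = hMat n K k Y⁻¹ := by
  refine Matrix.inv_eq_right_inv ?_
  rw [hMat, hMat, diagonal_mul_diagonal, ← diagonal_one]
  congr 1; funext x
  split_ifs <;> simp [hY]

theorem eMat_eq_transvection {j : ℕ} (ha : (a : ℕ) + 1 = j) (hb : (b : ℕ) = j) :
    eMat n K j = transvection a b 1 := by
  ext x y
  simp only [eMat, transvection, of_apply, Matrix.add_apply, Matrix.one_apply, Matrix.single_apply,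
    Fin.ext_iff]
  split_ifs <;> first | omega | simp

end

theorem eMat_hMat_braid_mutation_general (n : ℕ) (K : Type*) [Field K]
    (i : ℕ) (hi1 : 1 ≤ i) (hi : i ≤ n - 2) (X : K) (hX0 : X ≠ 0) (hX1 : X ≠ -1) :
    eMat n K i * hMat n K i X * eMat n K (i + 1) * eMat n K i
      = (hMat n K (i + 1) (1 + X⁻¹))⁻¹ * hMat n K i (1 + X) * eMat n K (i + 1) *
          eMat n K i * hMat n K (i + 1) X⁻¹ * eMat n K (i + 1) *
          (hMat n K i (1 + X⁻¹))⁻¹ * hMat n K (i + 1) (1 + X) := by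
  obtain ⟨p, hp⟩ : ∃ p : Fin n, (p : ℕ) + 1 = i := ⟨⟨i - 1, by omega⟩, by simp; omega⟩
  obtain ⟨q, hq⟩ : ∃ q : Fin n, (q : ℕ) = i := ⟨⟨i, by omega⟩, rfl⟩
  obtain ⟨r, hr⟩ : ∃ r : Fin n, (r : ℕ) = i + 1 := ⟨⟨i + 1, by omega⟩, rfl⟩
  have hX : 1 + X ≠ 0 := fun h => hX1 (by linear_combination h)
  have hinv : 1 + X⁻¹ = (1 + X) / X := by field_simp; ring
  rw [eMat_eq_transvection hp hq, eMat_eq_transvection (by omega : (q : ℕ) + 1 = i + 1) hr, hinv,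
    hMat_inv (div_ne_zero hX hX0), hMat_inv (div_ne_zero hX hX0), inv_div]
  simp (disch := omega) only [Matrix.mul_assoc, mul_one, hMat_mul_transvection_of_lt_of_le,
    hMat_mul_transvection_mul_of_lt_of_le, hMat_mul_transvection_mul_of_lt_iff]
  have htorus : hMat n K (i + 1) (X / (1 + X)) * (hMat n K i (1 + X) * (hMat n K (i + 1) X⁻¹ *
      (hMat n K i (X / (1 + X)) * hMat n K (i + 1) (1 + X)))) = hMat n K i X := by
    simp only [hMat, diagonal_mul_diagonal]
    congr 1; funext x
    split_ifs <;> first | omega | field_simp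
  have hbraid := transvection_mul_transvection_mul_transvection (Fin.ne_of_val_ne (by omega) : p ≠ q)
    (Fin.ne_of_val_ne (by omega) : q ≠ r) (Fin.ne_of_val_ne (by omega) : p ≠ r) 1 1 X hX
  rw [htorus, show X / (1 + X) * X⁻¹ = 1 / (1 + X) by field_simp]
  simp only [one_mul] at hbraid
  simp only [← Matrix.mul_assoc, hbraid]

/-- The matrix identity underlying the cluster `𝒳`-mutation for a braid move
`(i, i+1, i) → (i+1, i, i+1)`:
`eᵢ hⁱ(X) eᵢ₊₁ eᵢ = hⁱ⁺¹(1+X⁻¹)⁻¹ hⁱ(1+X) eᵢ₊₁ eᵢ hⁱ⁺¹(X⁻¹) eᵢ₊₁ hⁱ(1+X⁻¹)⁻¹ hⁱ⁺¹(1+X)`. -/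
theorem eMat_hMat_braid_mutation (n : ℕ) (hn : 3 ≤ n) (K : Type*) [Field K]
    (i : ℕ) (hi1 : 1 ≤ i) (hi : i ≤ n - 2) (X : K) (hX0 : X ≠ 0) (hX1 : X ≠ -1) :
    eMat n K i * hMat n K i X * eMat n K (i + 1) * eMat n K i
      = (hMat n K (i + 1) (1 + X⁻¹))⁻¹ * hMat n K i (1 + X) * eMat n K (i + 1) *
          eMat n K i * hMat n K (i + 1) X⁻¹ * eMat n K (i + 1) *
          (hMat n K i (1 + X⁻¹))⁻¹ * hMat n K (i + 1) (1 + X) :=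
  eMat_hMat_braid_mutation_general n K i hi1 hi X hX0 hX1
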